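/- arXiv:1806.06908 — 4 statements merged into one kernel-verified Lean document; each statement's English description precedes it below -/
import Mathlib

section
/- There exists a constant C > 0 such that for all M ≥ 3 and all positive nondecreasing weights g₁ ≤ g₂ ≤ ⋯ ≤ g_{M−2}, the equalized solution t* = (t*₀,…,t*_{M−1}) for these weights satisfies t*₁ ≥ C·M^{−3}; in particular, t*₁ is at least the first level of the equalized solution with uniform weights and the same number M of levels. -/
/-- The pairwise large-deviations rate
`r_{g,h}(p,q) = -(g+h)·log[(1-p)^{g/(g+h)}·(1-q)^{h/(g+h)} + p^{g/(g+h)}·q^{h/(g+h)}]`. -/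
noncomputable def pairRate (g h p q : ℝ) : ℝ :=
  -(g + h) *
    Real.log ((1 - p) ^ (g / (g + h)) * (1 - q) ^ (h / (g + h))
      + p ^ (g / (g + h)) * q ^ (h / (g + h)))

/-- The `i`-th rate (for `1 ≤ i ≤ M-1`) of a level vector `t` with weights `g`:
`r₁ = -g₁·log(1-t₁)`, `rᵢ = r_{g_{i-1},g_i}(t_{i-1},t_i)` for `2 ≤ i ≤ M-2`, and
`r_{M-1} = -g_{M-2}·log(t_{M-2})`. -/
noncomputable def rateAt (M : ℕ) (g t : ℕ → ℝ) (i : ℕ) : ℝ :=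
  if i = 1 then -(g 1) * Real.log (1 - t 1)
  else if i = M - 1 then -(g (M - 2)) * Real.log (t (M - 2))
  else pairRate (g (i - 1)) (g i) (t (i - 1)) (t i)

/-- `t` is an equalized solution with `M` levels for the weights `g`, with common rate `r`:
`t₀ = 0 < t₁ < ⋯ < t_{M-2} < 1 = t_{M-1}` and all of the `M-1` rates equal `r`. -/
def IsEqualizedWithRate (M : ℕ) (g t : ℕ → ℝ) (r : ℝ) : Prop :=
  t 0 = 0 ∧ t (M - 1) = 1 ∧ (∀ i, i < M - 1 → t i < t (i + 1)) ∧
    ∀ i, 1 ≤ i → i ≤ M - 1 → rateAt M g t i = r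

/-- `t` is an equalized solution with `M` levels for the weights `g`. -/
def IsEqualizedSol (M : ℕ) (g t : ℕ → ℝ) : Prop :=
  ∃ r, IsEqualizedWithRate M g t r

/-!
With `θᵢ = arcsin √tᵢ` one has `cos (θᵢ₊₁ - θᵢ) = √((1 - tᵢ)(1 - tᵢ₊₁)) + √(tᵢ tᵢ₊₁)`, the
Bhattacharyya coefficient `B(tᵢ, tᵢ₊₁)`, and Hölder's inequality gives
`r_{g,h}(p, q) ≥ -2 min(g, h) · log B(p, q)`, with equality when `g = h`. For nondecreasing
weights each rate equation therefore yields `cos (θᵢ₊₁ - θᵢ) ≥ e^{-r/(2g₁)} = cos θ₁`, so no gap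
of the angles exceeds `θ₁`. The `M - 1` gaps add up to `π/2`, hence `θ₁ ≥ π/(2(M - 1))` and
`t₁ = sin² θ₁ ≥ sin² (π/(2(M - 1))) ≥ M⁻³`. For uniform weights all gaps equal `θ₁`, so the
uniform first level is exactly `sin² (π/(2(M - 1)))`.
-/

open Real Set

theorem rpow_mul_rpow_add_rpow_mul_rpow_le {w s₁ s₂ y₁ y₂ : ℝ} (hw₀ : 0 ≤ w) (hw₁ : w ≤ 1)
    (hs₁ : 0 ≤ s₁) (hs₂ : 0 ≤ s₂) (hy₁ : 0 ≤ y₁) (hy₂ : 0 ≤ y₂) (hS : 0 < s₁ + s₂)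
    (hY : 0 < y₁ + y₂) :
    s₁ ^ w * y₁ ^ (1 - w) + s₂ ^ w * y₂ ^ (1 - w) ≤ (s₁ + s₂) ^ w * (y₁ + y₂) ^ (1 - w) := by
  set S := s₁ + s₂
  set Y := y₁ + y₂
  have normalize : ∀ s y, 0 ≤ s → 0 ≤ y →
      s ^ w * y ^ (1 - w) = S ^ w * Y ^ (1 - w) * ((s / S) ^ w * (y / Y) ^ (1 - w)) := by
    intro s y hs hy
    rw [div_rpow hs hS.le, div_rpow hy hY.le]
    field_simp
  have amgm : ∀ s y, 0 ≤ s → 0 ≤ y →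
      (s / S) ^ w * (y / Y) ^ (1 - w) ≤ w * (s / S) + (1 - w) * (y / Y) := fun s y hs hy =>
    geom_mean_le_arith_mean2_weighted hw₀ (by linarith) (by positivity) (by positivity)
      (by ring)
  calc s₁ ^ w * y₁ ^ (1 - w) + s₂ ^ w * y₂ ^ (1 - w)
      = S ^ w * Y ^ (1 - w) * ((s₁ / S) ^ w * (y₁ / Y) ^ (1 - w)
          + (s₂ / S) ^ w * (y₂ / Y) ^ (1 - w)) := by
        rw [normalize s₁ y₁ hs₁ hy₁, normalize s₂ y₂ hs₂ hy₂]; ring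
    _ ≤ S ^ w * Y ^ (1 - w) * ((w * (s₁ / S) + (1 - w) * (y₁ / Y))
          + (w * (s₂ / S) + (1 - w) * (y₂ / Y))) := by
        gcongr
        exacts [amgm s₁ y₁ hs₁ hy₁, amgm s₂ y₂ hs₂ hy₂]
    _ = S ^ w * Y ^ (1 - w) := by
        field_simp
        ring

/-- The Bhattacharyya coefficient of the Bernoulli distributions with parameters `p` and `q`. -/
noncomputable def bhattacharyya (p q : ℝ) : ℝ := √((1 - p) * (1 - q)) + √(p * q)

theorem cos_arcsin_sqrt_sub_arcsin_sqrt {p q : ℝ} (hp : p ∈ Icc 0 1) (hq : q ∈ Icc 0 1) :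
    cos (arcsin √q - arcsin √p) = bhattacharyya p q := by
  have hsqrt : ∀ x ∈ Icc (0 : ℝ) 1, sin (arcsin √x) = √x := fun x hx =>
    sin_arcsin (by linarith [sqrt_nonneg x]) (sqrt_le_one.2 hx.2)
  rw [cos_sub, cos_arcsin, cos_arcsin, hsqrt p hp, hsqrt q hq, sq_sqrt hp.1, sq_sqrt hq.1,
    ← sqrt_mul (by linarith [hq.2]), ← sqrt_mul hq.1, bhattacharyya, mul_comm (1 - q),
    mul_comm q]

theorem bhattacharyya_pos {p q : ℝ} (hp : 0 < p) (hq : 0 < q) : 0 < bhattacharyya p q :=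
  add_pos_of_nonneg_of_pos (sqrt_nonneg _) (sqrt_pos.2 (mul_pos hp hq))

theorem pairRate_self {g : ℝ} (hg : g ≠ 0) {p : ℝ} (hp : p ∈ Icc 0 1) (q : ℝ) :
    pairRate g g p q = -(2 * g) * log (bhattacharyya p q) := by
  have half : g / (g + g) = 1 / 2 := by field_simp; ring
  rw [pairRate, half, ← two_mul, ← sqrt_eq_rpow, ← sqrt_eq_rpow, ← sqrt_eq_rpow,
    ← sqrt_eq_rpow, ← sqrt_mul (by linarith [hp.2]), ← sqrt_mul hp.1, bhattacharyya]

theorem rpow_mul_one_sub_rpow_eq {x y a : ℝ} (hx : 0 ≤ x) (hy : 0 < y) :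
    x ^ a * y ^ (1 - a) = √(x * y) ^ (2 * a) * y ^ (1 - 2 * a) := by
  rw [sqrt_eq_rpow, ← rpow_mul (by positivity), mul_rpow hx hy.le, mul_assoc,
    ← rpow_add hy]
  ring_nf

theorem neg_two_mul_log_bhattacharyya_le_pairRate {g h p q : ℝ} (hg : 0 < g) (hgh : g ≤ h)
    (hp : p ∈ Ioo 0 1) (hq : q ∈ Ioo 0 1) :
    -(2 * g) * log (bhattacharyya p q) ≤ pairRate g h p q := by
  obtain ⟨hp₀, hp₁⟩ := hp
  obtain ⟨hq₀, hq₁⟩ := hq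
  have hgh₀ : 0 < g + h := by linarith
  set a := g / (g + h) with ha
  have ha₀ : 0 < a := div_pos hg hgh₀
  have ha₁ : 2 * a ≤ 1 := by rw [ha, ← mul_div_assoc, div_le_one hgh₀]; linarith
  have hb : h / (g + h) = 1 - a := by rw [ha]; field_simp; ring
  set A := (1 - p) ^ a * (1 - q) ^ (1 - a) + p ^ a * q ^ (1 - a)
  have hA₀ : 0 < A := by positivity
  have holder : A ≤ bhattacharyya p q ^ (2 * a) := by
    have := rpow_mul_rpow_add_rpow_mul_rpow_le (w := 2 * a) (y₁ := 1 - q) (y₂ := q)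
      (by linarith) ha₁ (sqrt_nonneg ((1 - p) * (1 - q))) (sqrt_nonneg (p * q))
      (by linarith) hq₀.le (bhattacharyya_pos hp₀ hq₀) (by norm_num)
    rwa [sub_add_cancel, one_rpow, mul_one, ← rpow_mul_one_sub_rpow_eq (by linarith)
      (by linarith), ← rpow_mul_one_sub_rpow_eq hp₀.le hq₀] at this
  calc -(2 * g) * log (bhattacharyya p q)
      = -(g + h) * log (bhattacharyya p q ^ (2 * a)) := by
        rw [log_rpow (bhattacharyya_pos hp₀ hq₀), ha]; field_simp
    _ ≤ -(g + h) * log A :=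
        mul_le_mul_of_nonpos_left (log_le_log hA₀ holder) (by linarith)
    _ = pairRate g h p q := by rw [pairRate, hb]

theorem sqrt_eq_exp_of_neg_mul_log_eq {c x r : ℝ} (hc : 0 < c) (hx : 0 < x)
    (h : -c * log x = r) : √x = exp (-(r / (2 * c))) := by
  rw [← h, sqrt_eq_rpow, rpow_def_of_pos hx]
  congr 1
  field_simp

theorem exp_neg_div_le_of_neg_mul_log_le {c x r : ℝ} (hc : 0 < c) (hx : 0 < x)
    (h : -c * log x ≤ r) : exp (-(r / c)) ≤ x := by
  rw [← exp_log hx, exp_le_exp, neg_le, le_div_iff₀ hc]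
  linarith

noncomputable def levelAngle (t : ℕ → ℝ) (i : ℕ) : ℝ := arcsin √(t i)

theorem levelAngle_mem_Icc (t : ℕ → ℝ) (i : ℕ) : levelAngle t i ∈ Icc 0 (π / 2) :=
  ⟨arcsin_nonneg.2 (sqrt_nonneg _), arcsin_le_pi_div_two _⟩

theorem levelAngle_one_mem_Icc (t : ℕ → ℝ) : levelAngle t 1 ∈ Icc 0 π :=
  ⟨(levelAngle_mem_Icc t 1).1, by linarith [(levelAngle_mem_Icc t 1).2, pi_pos]⟩

theorem sin_levelAngle_sq {t : ℕ → ℝ} {i : ℕ} (ht : t i ∈ Icc 0 1) :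
    sin (levelAngle t i) ^ 2 = t i := by
  rw [levelAngle, sin_arcsin (by linarith [sqrt_nonneg (t i)]) (sqrt_le_one.2 ht.2),
    sq_sqrt ht.1]

namespace IsEqualizedWithRate

variable {M : ℕ} {g t : ℕ → ℝ} {r : ℝ}

theorem lt_of_lt (h : IsEqualizedWithRate M g t r) {i j : ℕ} (hij : i < j) (hj : j ≤ M - 1) :
    t i < t j :=
  strictMonoOn_Iic_of_lt_succ (fun m hm => by simpa using h.2.2.1 m hm)
    (show i ≤ M - 1 by omega) hj hij

theorem mem_Icc (h : IsEqualizedWithRate M g t r) {i : ℕ} (hi : i ≤ M - 1) :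
    t i ∈ Icc 0 1 := by
  constructor
  · rcases Nat.eq_zero_or_pos i with rfl | hi₀
    · exact h.1.ge
    · exact h.1 ▸ (h.lt_of_lt hi₀ hi).le
  · rcases hi.lt_or_eq with hi | rfl
    · exact h.2.1 ▸ (h.lt_of_lt hi le_rfl).le
    · exact h.2.1.le

theorem mem_Ioo (h : IsEqualizedWithRate M g t r) {i : ℕ} (hi₀ : 1 ≤ i) (hi : i < M - 1) :
    t i ∈ Ioo 0 1 :=
  ⟨h.1 ▸ h.lt_of_lt hi₀ (by omega), h.2.1 ▸ h.lt_of_lt hi le_rfl⟩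

theorem rateAt_eq (h : IsEqualizedWithRate M g t r) {i : ℕ} (hi₀ : 1 ≤ i) (hi : i ≤ M - 1) :
    rateAt M g t i = r :=
  h.2.2.2 i hi₀ hi

theorem levelAngle_zero (h : IsEqualizedWithRate M g t r) : levelAngle t 0 = 0 := by
  simp [levelAngle, h.1]

theorem levelAngle_last (h : IsEqualizedWithRate M g t r) : levelAngle t (M - 1) = π / 2 := by
  simp [levelAngle, h.2.1]

theorem sum_levelAngle_gaps (h : IsEqualizedWithRate M g t r) :
    ∑ j ∈ Finset.range (M - 1), (levelAngle t (j + 1) - levelAngle t j) = π / 2 := by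
  rw [Finset.sum_range_sub, h.levelAngle_last, h.levelAngle_zero, sub_zero]

theorem levelAngle_gap_mem_Icc (h : IsEqualizedWithRate M g t r) {j : ℕ} (hj : j < M - 1) :
    levelAngle t (j + 1) - levelAngle t j ∈ Icc 0 π := by
  have hmono : levelAngle t j ≤ levelAngle t (j + 1) :=
    monotone_arcsin (sqrt_le_sqrt (h.lt_of_lt (Nat.lt_succ_self j) hj).le)
  have hle := (levelAngle_mem_Icc t (j + 1)).2
  have hnn := (levelAngle_mem_Icc t j).1
  constructor <;> linarith [pi_pos]

theorem cos_levelAngle_gap (h : IsEqualizedWithRate M g t r) {j : ℕ} (hj : j < M - 1) :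
    cos (levelAngle t (j + 1) - levelAngle t j) = bhattacharyya (t j) (t (j + 1)) :=
  cos_arcsin_sqrt_sub_arcsin_sqrt (h.mem_Icc (by omega)) (h.mem_Icc hj)

theorem cos_levelAngle_one (h : IsEqualizedWithRate M g t r) (hM : 3 ≤ M) (hg : 0 < g 1) :
    cos (levelAngle t 1) = exp (-(r / (2 * g 1))) := by
  have hrate := h.rateAt_eq le_rfl (by omega)
  rw [rateAt, if_pos rfl] at hrate
  have ht₁ := h.mem_Ioo le_rfl (by omega)
  rw [levelAngle, cos_arcsin, sq_sqrt ht₁.1.le]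
  exact sqrt_eq_exp_of_neg_mul_log_eq hg (by linarith [ht₁.2]) hrate

theorem cos_levelAngle_gap_last (h : IsEqualizedWithRate M g t r) (hM : 3 ≤ M)
    (hg : 0 < g (M - 2)) :
    cos (levelAngle t (M - 2 + 1) - levelAngle t (M - 2)) = exp (-(r / (2 * g (M - 2)))) := by
  have hrate := h.rateAt_eq (i := M - 1) (by omega) le_rfl
  rw [rateAt, if_neg (by omega), if_pos rfl] at hrate
  have ht := h.mem_Ioo (i := M - 2) (by omega) (by omega)
  rw [show M - 2 + 1 = M - 1 by omega, h.levelAngle_last, cos_pi_div_two_sub, levelAngle,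
    sin_arcsin (by linarith [sqrt_nonneg (t (M - 2))]) (sqrt_le_one.2 ht.2.le)]
  exact sqrt_eq_exp_of_neg_mul_log_eq hg ht.1 hrate

theorem pairRate_eq (h : IsEqualizedWithRate M g t r) {j : ℕ} (hj₀ : 1 ≤ j)
    (hj : j + 1 < M - 1) : pairRate (g j) (g (j + 1)) (t j) (t (j + 1)) = r := by
  have hrate := h.rateAt_eq (i := j + 1) (by omega) (by omega)
  rwa [rateAt, if_neg (by omega), if_neg (by omega), Nat.add_sub_cancel] at hrate

theorem rate_pos (h : IsEqualizedWithRate M g t r) (hM : 3 ≤ M) (hg : 0 < g 1) : 0 < r := by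
  have hrate := h.rateAt_eq le_rfl (by omega)
  rw [rateAt, if_pos rfl] at hrate
  have ht₁ := h.mem_Ioo le_rfl (by omega)
  rw [← hrate, neg_mul, neg_pos]
  exact mul_neg_of_pos_of_neg hg (log_neg (by linarith [ht₁.2]) (by linarith [ht₁.1]))

theorem pi_div_le_levelAngle_one_of_gap_le (h : IsEqualizedWithRate M g t r) (hM : 2 ≤ M)
    (hgap : ∀ j < M - 1, levelAngle t (j + 1) - levelAngle t j ≤ levelAngle t 1) :
    π / (2 * ((M - 1 : ℕ) : ℝ)) ≤ levelAngle t 1 := by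
  have hsum := Finset.sum_le_sum fun j hj => hgap j (Finset.mem_range.1 hj)
  rw [h.sum_levelAngle_gaps, Finset.sum_const, Finset.card_range, nsmul_eq_mul] at hsum
  have hM₁ : (1 : ℝ) ≤ ((M - 1 : ℕ) : ℝ) := by exact_mod_cast (by omega : 1 ≤ M - 1)
  rw [div_le_iff₀ (by linarith)]
  linarith

theorem levelAngle_one_le_pi_div_of_le_gap (h : IsEqualizedWithRate M g t r) (hM : 2 ≤ M)
    (hgap : ∀ j < M - 1, levelAngle t 1 ≤ levelAngle t (j + 1) - levelAngle t j) :
    levelAngle t 1 ≤ π / (2 * ((M - 1 : ℕ) : ℝ)) := by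
  have hsum := Finset.sum_le_sum fun j hj => hgap j (Finset.mem_range.1 hj)
  rw [h.sum_levelAngle_gaps, Finset.sum_const, Finset.card_range, nsmul_eq_mul] at hsum
  have hM₁ : (1 : ℝ) ≤ ((M - 1 : ℕ) : ℝ) := by exact_mod_cast (by omega : 1 ≤ M - 1)
  rw [le_div_iff₀ (by linarith)]
  linarith

theorem exp_le_cos_levelAngle_gap (h : IsEqualizedWithRate M g t r) (hM : 3 ≤ M)
    (hg₁ : 0 < g 1) (hg : ∀ i j, 1 ≤ i → i ≤ j → j ≤ M - 2 → g i ≤ g j) {j : ℕ}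
    (hj : j < M - 1) :
    exp (-(r / (2 * g 1))) ≤ cos (levelAngle t (j + 1) - levelAngle t j) := by
  have hr := h.rate_pos hM hg₁
  rcases Nat.eq_zero_or_pos j with rfl | hj₀
  · rw [zero_add, h.levelAngle_zero, sub_zero, h.cos_levelAngle_one hM hg₁]
  rcases (Nat.le_of_lt_succ (by omega : j < M - 2 + 1)).lt_or_eq with hj' | rfl
  · have hgj : g 1 ≤ g j := hg 1 j le_rfl hj₀ (by omega)
    have htj := h.mem_Ioo hj₀ (by omega)
    have htj₁ := h.mem_Ioo (i := j + 1) (by omega) (by omega)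
    have hpair := neg_two_mul_log_bhattacharyya_le_pairRate (by linarith)
      (hg j (j + 1) hj₀ (by omega) (by omega)) htj htj₁
    rw [h.pairRate_eq hj₀ (by omega)] at hpair
    rw [h.cos_levelAngle_gap hj]
    calc exp (-(r / (2 * g 1))) ≤ exp (-(r / (2 * g j))) := by gcongr
      _ ≤ bhattacharyya (t j) (t (j + 1)) :=
        exp_neg_div_le_of_neg_mul_log_le (by linarith) (bhattacharyya_pos htj.1 htj₁.1) hpair
  · have hgM : g 1 ≤ g (M - 2) := hg 1 (M - 2) le_rfl (by omega) le_rfl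
    rw [h.cos_levelAngle_gap_last hM (by linarith)]
    gcongr

theorem pi_div_le_levelAngle_one (h : IsEqualizedWithRate M g t r) (hM : 3 ≤ M)
    (hg₁ : 0 < g 1) (hg : ∀ i j, 1 ≤ i → i ≤ j → j ≤ M - 2 → g i ≤ g j) :
    π / (2 * ((M - 1 : ℕ) : ℝ)) ≤ levelAngle t 1 :=
  h.pi_div_le_levelAngle_one_of_gap_le (by omega) fun _ hj =>
    (strictAntiOn_cos.le_iff_ge (levelAngle_one_mem_Icc t) (h.levelAngle_gap_mem_Icc hj)).1 <|
      h.cos_levelAngle_one hM hg₁ ▸ h.exp_le_cos_levelAngle_gap hM hg₁ hg hj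

theorem cos_levelAngle_gap_of_uniform (h : IsEqualizedWithRate M (fun _ => 1) t r)
    (hM : 3 ≤ M) {j : ℕ} (hj : j < M - 1) :
    cos (levelAngle t (j + 1) - levelAngle t j) = exp (-(r / 2)) := by
  rcases Nat.eq_zero_or_pos j with rfl | hj₀
  · rw [zero_add, h.levelAngle_zero, sub_zero, h.cos_levelAngle_one hM one_pos, mul_one]
  rcases (Nat.le_of_lt_succ (by omega : j < M - 2 + 1)).lt_or_eq with hj' | rfl
  · have hrate := h.pairRate_eq hj₀ (by omega)
    have hp := h.mem_Ioo hj₀ (by omega)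
    rw [pairRate_self one_ne_zero ⟨hp.1.le, hp.2.le⟩] at hrate
    rw [h.cos_levelAngle_gap hj, ← exp_log (bhattacharyya_pos hp.1
      (h.mem_Ioo (i := j + 1) (by omega) (by omega)).1)]
    congr 1
    linarith
  · rw [h.cos_levelAngle_gap_last hM one_pos, mul_one]

theorem levelAngle_one_le_of_uniform (h : IsEqualizedWithRate M (fun _ => 1) t r)
    (hM : 3 ≤ M) : levelAngle t 1 ≤ π / (2 * ((M - 1 : ℕ) : ℝ)) :=
  h.levelAngle_one_le_pi_div_of_le_gap (by omega) fun j hj =>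
    (strictAntiOn_cos.le_iff_ge (h.levelAngle_gap_mem_Icc hj) (levelAngle_one_mem_Icc t)).1 <| by
      rw [h.cos_levelAngle_gap_of_uniform hM hj, h.cos_levelAngle_one hM one_pos, mul_one]

end IsEqualizedWithRate

theorem sin_sq_le_sin_sq {x y : ℝ} (hx : 0 ≤ x) (hxy : x ≤ y) (hy : y ≤ π / 2) :
    sin x ^ 2 ≤ sin y ^ 2 :=
  pow_le_pow_left₀ (sin_nonneg_of_nonneg_of_le_pi hx (by linarith [pi_pos]))
    (sin_le_sin_of_le_of_le_pi_div_two (by linarith [pi_pos]) hy hxy) 2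

theorem one_div_cube_le_sin_sq {M : ℕ} (hM : 2 ≤ M) :
    1 / (M : ℝ) ^ 3 ≤ sin (π / (2 * ((M - 1 : ℕ) : ℝ))) ^ 2 := by
  have hn : (1 : ℝ) ≤ ((M - 1 : ℕ) : ℝ) := by exact_mod_cast (by omega : 1 ≤ M - 1)
  have hnM : ((M - 1 : ℕ) : ℝ) ≤ M := by exact_mod_cast Nat.sub_le M 1
  have hx : 0 ≤ π / (2 * ((M - 1 : ℕ) : ℝ)) := by positivity
  have hx' : π / (2 * ((M - 1 : ℕ) : ℝ)) ≤ π / 2 :=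
    div_le_div_of_nonneg_left pi_pos.le two_pos (by linarith)
  have hsin := mul_le_sin hx hx'
  rw [show 2 / π * (π / (2 * ((M - 1 : ℕ) : ℝ))) = 1 / ((M - 1 : ℕ) : ℝ) by
    field_simp] at hsin
  calc 1 / (M : ℝ) ^ 3 ≤ (1 / ((M - 1 : ℕ) : ℝ)) ^ 2 := by
        rw [div_pow, one_pow, one_div_le_one_div (by positivity) (by positivity)]
        nlinarith [mul_le_mul hnM hnM (by linarith) (by linarith)]
    _ ≤ sin (π / (2 * ((M - 1 : ℕ) : ℝ))) ^ 2 := by gcongr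

/-- **Polynomial lower bound on the first level for nondecreasing weights.**
There is `C > 0` such that for all `M ≥ 3` and all positive nondecreasing weights
`g₁ ≤ ⋯ ≤ g_{M-2}`, the equalized solution `t*` for `g` satisfies `t*₁ ≥ C·M⁻³`;
in particular `t*₁` is at least the first level of the equalized solution with uniform
weights and the same number of levels. -/
theorem equalized_first_level_lower_bound_monotone :
    ∃ C : ℝ, 0 < C ∧ ∀ M : ℕ, 3 ≤ M →
      ∀ g : ℕ → ℝ, (∀ i, 1 ≤ i → i ≤ M - 2 → 0 < g i) →
        (∀ i j, 1 ≤ i → i ≤ j → j ≤ M - 2 → g i ≤ g j) →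
        ∀ t : ℕ → ℝ, IsEqualizedSol M g t →
          C / (M : ℝ) ^ 3 ≤ t 1 ∧
          ∀ u : ℕ → ℝ, IsEqualizedSol M (fun _ => (1 : ℝ)) u → u 1 ≤ t 1 := by
  refine ⟨1, one_pos, fun M hM g hgpos hgmono t ⟨r, ht⟩ => ?_⟩
  have hθ := ht.pi_div_le_levelAngle_one hM (hgpos 1 le_rfl (by omega)) hgmono
  have hθ' := (levelAngle_mem_Icc t 1).2
  have hsin : sin (π / (2 * ((M - 1 : ℕ) : ℝ))) ^ 2 ≤ t 1 := by
    rw [← sin_levelAngle_sq (ht.mem_Icc (by omega))]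
    exact sin_sq_le_sin_sq (by positivity) hθ hθ'
  refine ⟨(one_div_cube_le_sin_sq (by omega)).trans hsin, fun u ⟨_, hu⟩ => ?_⟩
  calc u 1 = sin (levelAngle u 1) ^ 2 := (sin_levelAngle_sq (hu.mem_Icc (by omega))).symm
    _ ≤ sin (π / (2 * ((M - 1 : ℕ) : ℝ))) ^ 2 :=
        sin_sq_le_sin_sq (levelAngle_mem_Icc u 1).1 (hu.levelAngle_one_le_of_uniform hM)
          (hθ.trans hθ')
    _ ≤ t 1 := hsin
end

section
/- For each M ≥ 3 let t^M = (t^M_0,…,t^M_{M−1}) be the equalized solution with uniform weights and M levels, and define the step function β_M : [0,1) → [0,1] by β_M(θ) = t^M_{⌊Mθ⌋}. Then for every positive integer C there exists a function β : [0,1) → [0,1] such that β_{C·2^N + 1} converges to β uniformly on [0,1) as N → ∞. -/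
/-!
Put `αᵢ = arcsin √tᵢ ∈ [0, π/2]`. Then `√((1-p)(1-q)) + √(pq) = cos (α_q - α_p)`, so every rate
of an equalized solution is `-2 log cos` of an angle increment `αᵢ₊₁ - αᵢ ∈ (0, π/2)`; equal rates
force equal increments, and `α₀ = 0`, `α_{M-1} = π/2` give `t^M_i = sin² (iπ / (2(M-1)))`. Since `sin²` is
1-Lipschitz, `β_M` is within `π / (2(M-1))` of `θ ↦ sin² (πθ/2)` on `[0,1)`, so the whole sequence
converges uniformly, in particular along `M = C·2^N + 1`.
-/

open Real Set Filter

lemma abs_sin_sq_sub_sin_sq_le (a b : ℝ) : |sin a ^ 2 - sin b ^ 2| ≤ |a - b| := by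
  have hcos : sin a ^ 2 - sin b ^ 2 = (cos (2 * b) - cos (2 * a)) / 2 := by
    rw [sin_sq, sin_sq, cos_sq, cos_sq]; ring
  have hlip := abs_cos_sub_cos_le (2 * b) (2 * a)
  rw [← mul_sub, abs_mul, abs_two, abs_sub_comm b] at hlip
  rw [hcos, abs_div, abs_two]
  linarith

lemma sin_sq_arcsin_sqrt {x : ℝ} (hx : x ∈ Icc 0 1) : sin (arcsin √x) ^ 2 = x := by
  rw [sin_arcsin (by linarith [sqrt_nonneg x]) (sqrt_le_one.mpr hx.2), sq_sqrt hx.1]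

lemma strictMonoOn_arcsin_sqrt : StrictMonoOn (fun x => arcsin √x) (Icc 0 1) :=
  fun x hx y hy hxy => strictMonoOn_arcsin
    ⟨by linarith [sqrt_nonneg x], sqrt_le_one.mpr hx.2⟩
    ⟨by linarith [sqrt_nonneg y], sqrt_le_one.mpr hy.2⟩ (sqrt_lt_sqrt hx.1 hxy)

lemma injOn_log_cos : InjOn (fun x => log (cos x)) (Ico 0 (π / 2)) := by
  intro x hx y hy hxy
  have hcos : ∀ z ∈ Ico 0 (π / 2), cos z ∈ Ioi 0 := fun z hz =>
    cos_pos_of_mem_Ioo ⟨by linarith [pi_pos, hz.1], hz.2⟩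
  refine injOn_cos ⟨hx.1, by linarith [hx.2, pi_pos]⟩ ⟨hy.1, by linarith [hy.2, pi_pos]⟩ ?_
  exact log_injOn_pos (hcos x hx) (hcos y hy) hxy

lemma eq_mul_of_forall_succ_sub_eq {a : ℕ → ℝ} {d : ℝ} {m : ℕ} (h0 : a 0 = 0)
    (h : ∀ i < m, a (i + 1) - a i = d) : ∀ i ≤ m, a i = i * d := by
  intro i hi
  induction i with
  | zero => simp [h0]
  | succ i ih =>
    have := h i hi
    rw [ih (by omega)] at this
    push_cast; linarith

lemma pairRate_one_one_sin_sq {a b : ℝ} (ha : a ∈ Icc 0 (π / 2)) (hb : b ∈ Icc 0 (π / 2)) :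
    pairRate 1 1 (sin a ^ 2) (sin b ^ 2) = -2 * log (cos (b - a)) := by
  have hsin : ∀ x ∈ Icc 0 (π / 2), (sin x ^ 2) ^ (1 / 2 : ℝ) = sin x := fun x hx => by
    rw [← sqrt_eq_rpow, sqrt_sq (sin_nonneg_of_nonneg_of_le_pi hx.1 (by linarith [hx.2, pi_pos]))]
  have hcos : ∀ x ∈ Icc 0 (π / 2), (1 - sin x ^ 2) ^ (1 / 2 : ℝ) = cos x := fun x hx => by
    rw [← cos_sq', ← sqrt_eq_rpow,
      sqrt_sq (cos_nonneg_of_mem_Icc ⟨by linarith [hx.1, pi_pos], hx.2⟩)]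
  rw [pairRate, show (1 : ℝ) / (1 + 1) = 1 / 2 by norm_num, hsin a ha, hsin b hb, hcos a ha,
    hcos b hb, cos_sub]
  ring_nf

lemma rateAt_uniform_eq_neg_two_mul_log_cos {m : ℕ} {t α : ℕ → ℝ}
    (hα : ∀ i ≤ m, α i ∈ Icc 0 (π / 2)) (ht : ∀ i ≤ m, t i = sin (α i) ^ 2)
    (hα0 : α 0 = 0) (hαm : α m = π / 2) {i : ℕ} (hi : i < m) :
    rateAt (m + 1) (fun _ => 1) t (i + 1) = -2 * log (cos (α (i + 1) - α i)) := by
  rw [rateAt, Nat.add_sub_cancel]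
  split_ifs with h1 hm
  · obtain rfl : i = 0 := by omega
    rw [ht 1 (by omega), hα0, sub_zero, ← cos_sq', log_pow]
    push_cast; ring
  · obtain rfl : m = i + 1 := hm.symm
    rw [show i + 1 + 1 - 2 = i by omega, ht i (by omega), hαm, cos_pi_div_two_sub, log_pow]
    push_cast; ring
  · rw [Nat.add_sub_cancel, ht i (by omega), ht (i + 1) hi]
    exact pairRate_one_one_sin_sq (hα i (by omega)) (hα (i + 1) hi)

theorem IsEqualizedSol.eq_sin_sq_of_uniform {m : ℕ} (hm : 2 ≤ m) {t : ℕ → ℝ}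
    (ht : IsEqualizedSol (m + 1) (fun _ => 1) t) :
    ∀ i ≤ m, t i = sin (i * π / (2 * m)) ^ 2 := by
  obtain ⟨r, ht0, htm, hstep, hrate⟩ := ht
  simp only [Nat.add_sub_cancel] at htm hstep hrate
  have hmono : StrictMonoOn t (Iic m) := strictMonoOn_Iic_of_lt_succ hstep
  have ht01 : ∀ i ≤ m, t i ∈ Icc 0 1 := fun i hi =>
    ⟨ht0 ▸ hmono.monotoneOn (Nat.zero_le m) hi (Nat.zero_le i),
     htm ▸ hmono.monotoneOn hi (le_refl m) hi⟩
  set α : ℕ → ℝ := fun i => arcsin √(t i) with hα_def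
  have hαmono : StrictMonoOn α (Iic m) :=
    strictMonoOn_arcsin_sqrt.comp hmono fun i hi => ht01 i hi
  have hα : ∀ i ≤ m, α i ∈ Icc 0 (π / 2) := fun i _ =>
    ⟨arcsin_nonneg.mpr (sqrt_nonneg _), arcsin_le_pi_div_two _⟩
  have hα0 : α 0 = 0 := by simp [hα_def, ht0]
  have hαm : α m = π / 2 := by simp [hα_def, htm]
  have htα : ∀ i ≤ m, t i = sin (α i) ^ 2 := fun i hi => (sin_sq_arcsin_sqrt (ht01 i hi)).symm
  have hrate' : ∀ i < m, -2 * log (cos (α (i + 1) - α i)) = r := fun i hi => by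
    rw [← rateAt_uniform_eq_neg_two_mul_log_cos hα htα hα0 hαm hi]
    exact hrate (i + 1) (by omega) (by omega)
  -- each increment is positive, and smaller than `π / 2` because there are at least two of them
  have hgap : ∀ i < m, α (i + 1) - α i ∈ Ico 0 (π / 2) := by
    intro i hi
    have hlt := hαmono (show i ≤ m by omega) (show i + 1 ≤ m by omega) (Nat.lt_succ_self i)
    refine ⟨by linarith, ?_⟩
    rcases Nat.lt_or_ge (i + 1) m with hi' | hi'
    · linarith [hαmono (show i + 1 ≤ m by omega) (le_refl m) hi', (hα i hi.le).1]
    · linarith [hαmono (Nat.zero_le m) (show i ≤ m by omega) (show 0 < i by omega),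
        (hα (i + 1) hi).2]
  have hinc : ∀ i < m, α (i + 1) - α i = α 1 := fun i hi => by
    have h1 := hgap 0 (by omega)
    rw [hα0, sub_zero] at h1
    refine injOn_log_cos (hgap i hi) h1 ?_
    have := hrate' 0 (by omega)
    rw [hα0, sub_zero] at this
    linarith [hrate' i hi]
  have hlin := eq_mul_of_forall_succ_sub_eq hα0 hinc
  have hα1 : α 1 = π / (2 * m) := by
    have := hlin m le_rfl
    rw [hαm] at this
    field_simp
    linarith
  intro i hi
  rw [htα i hi, hlin i hi, hα1]
  ring_nf

lemma floor_succ_mul_le {θ : ℝ} (hθ : θ ∈ Ico 0 1) (m : ℕ) : ⌊((m + 1 : ℕ) : ℝ) * θ⌋₊ ≤ m := by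
  have : ⌊((m + 1 : ℕ) : ℝ) * θ⌋₊ < m + 1 := by
    rw [Nat.floor_lt (mul_nonneg (by positivity) hθ.1)]
    exact mul_lt_of_lt_one_right (by positivity) hθ.2
  omega

lemma abs_floor_succ_mul_sub_le {θ : ℝ} (hθ : θ ∈ Ico 0 1) (m : ℕ) :
    |(⌊((m + 1 : ℕ) : ℝ) * θ⌋₊ : ℝ) - m * θ| ≤ 1 := by
  have hle := Nat.floor_le (mul_nonneg (Nat.cast_nonneg (m + 1)) hθ.1)
  have hlt := Nat.lt_floor_add_one (((m + 1 : ℕ) : ℝ) * θ)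
  set k := ⌊((m + 1 : ℕ) : ℝ) * θ⌋₊
  push_cast at hle hlt
  rw [abs_le]
  constructor <;> linarith [hθ.1, hθ.2]

lemma abs_sin_sq_floor_sub_le {m : ℕ} (hm : 0 < m) {θ : ℝ} (hθ : θ ∈ Ico 0 1) :
    |sin (⌊((m + 1 : ℕ) : ℝ) * θ⌋₊ * π / (2 * m)) ^ 2 - sin (π * θ / 2) ^ 2| ≤ π / 2 / m := by
  have hm' : (0 : ℝ) < m := Nat.cast_pos.mpr hm
  calc _ ≤ |⌊((m + 1 : ℕ) : ℝ) * θ⌋₊ * π / (2 * m) - π * θ / 2| := abs_sin_sq_sub_sin_sq_le _ _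
    _ = π / 2 / m * |(⌊((m + 1 : ℕ) : ℝ) * θ⌋₊ : ℝ) - m * θ| := by
        rw [← abs_of_pos (by positivity : 0 < π / 2 / m), ← abs_mul]
        congr 1
        field_simp
    _ ≤ π / 2 / m := mul_le_of_le_one_right (by positivity) (abs_floor_succ_mul_sub_le hθ m)

lemma TendstoUniformlyOn.comp_tendsto {ι ι' α β : Type*} [UniformSpace β] {F : ι → α → β}
    {f : α → β} {p : Filter ι} {s : Set α} (h : TendstoUniformlyOn F f p s) {g : ι' → ι}
    {q : Filter ι'} (hg : Tendsto g q p) : TendstoUniformlyOn (fun n => F (g n)) f q s :=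
  fun u hu => hg (h u hu)

theorem tendstoUniformlyOn_equalized_step {T : ℕ → ℕ → ℝ}
    (hT : ∀ M : ℕ, 3 ≤ M → IsEqualizedSol M (fun _ => (1 : ℝ)) (T M)) :
    TendstoUniformlyOn (fun (m : ℕ) (θ : ℝ) => T (m + 1) ⌊((m + 1 : ℕ) : ℝ) * θ⌋₊)
      (fun θ => sin (π * θ / 2) ^ 2) atTop (Ico 0 1) := by
  rw [Metric.tendstoUniformlyOn_iff]
  intro ε hε
  filter_upwards [(tendsto_const_div_atTop_nhds_zero_nat (π / 2)).eventually (gt_mem_nhds hε),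
    eventually_ge_atTop 2] with m hmε hm θ hθ
  rw [dist_comm, Real.dist_eq,
    (hT (m + 1) (by omega)).eq_sin_sq_of_uniform hm _ (floor_succ_mul_le hθ m)]
  exact (abs_sin_sq_floor_sub_le (by omega) hθ).trans_lt hmε

/-- **Uniform convergence of the optimal step functions along exponential subsequences.**
For each `M ≥ 3` let `t^M` be the equalized solution with uniform weights and `M` levels and
let `β_M(θ) = t^M_{⌊Mθ⌋}` on `[0,1)`.  Then for each positive integer `C` there is a function
`β` such that `β_{C·2^N+1} → β` uniformly on `[0,1)` as `N → ∞`. -/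
theorem equalized_step_functions_converge
    (T : ℕ → ℕ → ℝ)
    (hT : ∀ M : ℕ, 3 ≤ M → IsEqualizedSol M (fun _ => (1 : ℝ)) (T M)) :
    ∀ C : ℕ, 0 < C → ∃ β : ℝ → ℝ,
      TendstoUniformlyOn
        (fun (N : ℕ) (θ : ℝ) => T (C * 2 ^ N + 1) ⌊((C * 2 ^ N + 1 : ℕ) : ℝ) * θ⌋₊)
        β Filter.atTop (Set.Ico (0 : ℝ) 1) := by
  intro C hC
  have hsub : Tendsto (fun N : ℕ => C * 2 ^ N) atTop atTop :=
    tendsto_atTop_mono (fun N => (Nat.lt_two_pow_self).le.trans (Nat.le_mul_of_pos_left _ hC))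
      tendsto_id
  exact ⟨_, (tendstoUniformlyOn_equalized_step hT).comp_tendsto hsub⟩
end

section
/- Let M ≥ 2. Over all vectors (s₀, s₁, …, s_M) with 0 = s₀ ≤ s₁ ≤ ⋯ ≤ s_M = 1, the objective G(s) = Σ_{1 ≤ i < j ≤ M} ( (s_j + s_{j−1})/2 − (s_i + s_{i−1})/2 )·(s_i − s_{i−1})·(s_j − s_{j−1}) is maximized at the equispaced vector s_i = i/M. -/
/-!
Writing `dᵢ = sᵢ - sᵢ₋₁`, the inner sum over `i < j` telescopes, and the whole objective collapses
to `G(s) = ((s_M - s₀)³ - ∑ⱼ dⱼ³) / 6`. For a partition of `[0, 1]` the increments are nonnegative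
with sum `1`, so by the power-mean inequality `∑ⱼ dⱼ³ ≥ 1 / M²`, with equality for equal increments.
-/

/-- The Spearman-ρ asymptotic objective for a partition `0 = s₀ ≤ ⋯ ≤ s_M = 1`:
`G(s) = Σ_{1 ≤ i < j ≤ M} ((s_j + s_{j-1})/2 - (s_i + s_{i-1})/2)·(s_i - s_{i-1})·(s_j - s_{j-1})`. -/
noncomputable def spearmanObj (M : ℕ) (s : ℕ → ℝ) : ℝ :=
  ∑ j ∈ Finset.Icc 1 M, ∑ i ∈ Finset.Ico 1 j,
    ((s j + s (j - 1)) / 2 - (s i + s (i - 1)) / 2) * (s i - s (i - 1)) * (s j - s (j - 1))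

open Finset

lemma sum_Icc_one_sub_pred {G : Type*} [AddCommGroup G] (f : ℕ → G) (n : ℕ) :
    ∑ i ∈ Icc 1 n, (f i - f (i - 1)) = f n - f 0 := by
  induction n with
  | zero => simp
  | succ n ih =>
    rw [sum_Icc_succ_top (by omega), ih, Nat.add_sub_cancel]
    abel

lemma sum_Icc_sub_midpoint_mul_sub (s : ℕ → ℝ) (a : ℝ) (k : ℕ) :
    ∑ i ∈ Icc 1 k, (a - (s i + s (i - 1)) / 2) * (s i - s (i - 1))
      = a * (s k - s 0) - (s k ^ 2 - s 0 ^ 2) / 2 := by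
  have hterm : ∀ i, (a - (s i + s (i - 1)) / 2) * (s i - s (i - 1))
      = (a * s i - s i ^ 2 / 2) - (a * s (i - 1) - s (i - 1) ^ 2 / 2) := fun i => by ring
  simp_rw [hterm, sum_Icc_one_sub_pred (fun i => a * s i - s i ^ 2 / 2)]
  ring

-- The inner sum is `dⱼ uv / 2` for `u = sⱼ - s₀`, `v = sⱼ₋₁ - s₀`; and `u³ - v³ - (u - v)³ = 3uv(u - v)`.
lemma spearmanObj_inner_sum (s : ℕ → ℝ) {j : ℕ} (hj : 1 ≤ j) :
    ∑ i ∈ Ico 1 j,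
        ((s j + s (j - 1)) / 2 - (s i + s (i - 1)) / 2) * (s i - s (i - 1)) * (s j - s (j - 1))
      = ((s j - s 0) ^ 3 - (s (j - 1) - s 0) ^ 3 - (s j - s (j - 1)) ^ 3) / 6 := by
  have hIco : Ico 1 j = Icc 1 (j - 1) := by
    rw [← Ico_add_one_right_eq_Icc, Nat.sub_add_cancel hj]
  rw [← sum_mul, hIco, sum_Icc_sub_midpoint_mul_sub]
  ring

theorem spearmanObj_eq (M : ℕ) (s : ℕ → ℝ) :
    spearmanObj M s = ((s M - s 0) ^ 3 - ∑ j ∈ Icc 1 M, (s j - s (j - 1)) ^ 3) / 6 := by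
  rw [spearmanObj, sum_congr rfl fun j hj => spearmanObj_inner_sum s (mem_Icc.1 hj).1,
    ← sum_div, sum_sub_distrib, sum_Icc_one_sub_pred (fun j => (s j - s 0) ^ 3)]
  ring

theorem spearmanObj_equispaced {M : ℕ} (hM : M ≠ 0) :
    spearmanObj M (fun i => (i : ℝ) / M) = (1 - 1 / (M : ℝ) ^ 2) / 6 := by
  have hM' : (M : ℝ) ≠ 0 := Nat.cast_ne_zero.2 hM
  have hincr : ∀ j ∈ Icc 1 M, ((j : ℝ) / M - ((j - 1 : ℕ) : ℝ) / M) ^ 3 = 1 / (M : ℝ) ^ 3 := by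
    intro j hj
    rw [Nat.cast_sub (mem_Icc.1 hj).1]
    field_simp
    ring
  rw [spearmanObj_eq, sum_congr rfl hincr, sum_const, Nat.card_Icc, Nat.add_sub_cancel,
    nsmul_eq_mul, Nat.cast_zero, zero_div, sub_zero, div_self hM']
  field_simp

theorem spearman_objective_maximized_at_equispaced_general
    (M : ℕ) (s : ℕ → ℝ)
    (h0 : s 0 = 0) (h1 : s M = 1) (hmono : ∀ i, i < M → s i ≤ s (i + 1)) :
    spearmanObj M s ≤ spearmanObj M (fun i => (i : ℝ) / M) := by
  have hM : M ≠ 0 := by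
    rintro rfl
    simp [h0] at h1
  have hincr : ∀ j ∈ Icc 1 M, 0 ≤ s j - s (j - 1) := by
    intro j hj
    obtain ⟨hj1, hjM⟩ := mem_Icc.1 hj
    have := hmono (j - 1) (by omega)
    rw [Nat.sub_add_cancel hj1] at this
    linarith
  have hsum : ∑ j ∈ Icc 1 M, (s j - s (j - 1)) = 1 := by
    rw [sum_Icc_one_sub_pred, h0, h1, sub_zero]
  have hpowmean := pow_sum_div_card_le_sum_pow hincr 2
  rw [hsum, Nat.card_Icc, Nat.add_sub_cancel, one_pow] at hpowmean
  rw [spearmanObj_eq, spearmanObj_equispaced hM, h0, h1]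
  linarith

/-- **Equispaced partitions maximize the Spearman-ρ objective.** -/
theorem spearman_objective_maximized_at_equispaced
    (M : ℕ) (hM : 2 ≤ M) (s : ℕ → ℝ)
    (h0 : s 0 = 0) (h1 : s M = 1) (hmono : ∀ i, i < M → s i ≤ s (i + 1)) :
    spearmanObj M s ≤ spearmanObj M (fun i => (i : ℝ) / M) :=
  spearman_objective_maximized_at_equispaced_general M s h0 h1 hmono
end

section
/- Let 0 < t₁ < t₂ < 1 and set c = [ (√(1−t₂) − √(1−t₁)) / (√t₁ − √t₂) ]². Then [ √( (1 − c/(1+c))·(1−t₂) ) + √( (c/(1+c))·t₂ ) ]² = (1/2)·[ 1 + √((1−t₁)(1−t₂)) + √(t₁·t₂) ]. -/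
/-!
Write `a = √t₁, u = √(1-t₁)` and `b = √t₂, v = √(1-t₂)`, so that `(a, u)` and `(b, v)` lie on the
unit circle and `ρ = ab + uv` is the cosine of the angle `δ` between them. The weight `c/(1+c)`
equals `(u-v)² / ((u-v)² + (b-a)²)`, the denominator being `2(1-ρ)`, and the two square roots
combine to `(ub - av)/√(2(1-ρ))`. Since `(ub - av)² = 1 - ρ²` (Lagrange's identity), the left-hand
side is `(1+ρ)/2`, i.e. `sin² δ / (2(1 - cos δ)) = cos² (δ/2)`.
-/

lemma div_sq_div_one_add_div_sq (x : ℝ) {y : ℝ} (hy : y ≠ 0) :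
    (x / y) ^ 2 / (1 + (x / y) ^ 2) = x ^ 2 / (x ^ 2 + y ^ 2) := by
  have : x ^ 2 + y ^ 2 ≠ 0 := by positivity
  field_simp
  ring

lemma one_sub_div_sq_div_one_add_div_sq (x : ℝ) {y : ℝ} (hy : y ≠ 0) :
    1 - (x / y) ^ 2 / (1 + (x / y) ^ 2) = y ^ 2 / (x ^ 2 + y ^ 2) := by
  have : x ^ 2 + y ^ 2 ≠ 0 := by positivity
  rw [div_sq_div_one_add_div_sq x hy]
  field_simp
  ring

lemma sqrt_sq_div_mul_sq {x p : ℝ} (hx : 0 ≤ x) (hp : 0 ≤ p) (s : ℝ) :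
    √(x ^ 2 / s * p ^ 2) = x * p / √s := by
  rw [show x ^ 2 / s * p ^ 2 = (x * p) ^ 2 / s by ring, Real.sqrt_div (sq_nonneg _),
    Real.sqrt_sq (mul_nonneg hx hp)]

theorem doubling_identity_of_unit_vectors {a b u v c : ℝ} (ha : a ^ 2 + u ^ 2 = 1)
    (hb : b ^ 2 + v ^ 2 = 1) (hb0 : 0 ≤ b) (hv0 : 0 ≤ v) (hab : a < b) (hvu : v ≤ u)
    (hc : c = ((v - u) / (a - b)) ^ 2) :
    (√((1 - c / (1 + c)) * v ^ 2) + √(c / (1 + c) * b ^ 2)) ^ 2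
      = 1 / 2 * (1 + u * v + a * b) := by
  have hc' : c = ((u - v) / (b - a)) ^ 2 := by
    rw [hc, ← neg_sub u, ← neg_sub b, neg_div_neg_eq]
  have hba : b - a ≠ 0 := (sub_pos.2 hab).ne'
  set ρ := a * b + u * v
  have hchord : (u - v) ^ 2 + (b - a) ^ 2 = 2 * (1 - ρ) := by linear_combination ha + hb
  have hlagrange : (u * b - a * v) ^ 2 = (1 - ρ) * (1 + ρ) := by
    linear_combination (b ^ 2 + v ^ 2) * ha + hb
  have hρ : 0 < 1 - ρ := by
    have : 0 < (u - v) ^ 2 + (b - a) ^ 2 := by positivity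
    linarith
  rw [hc', one_sub_div_sq_div_one_add_div_sq _ hba, div_sq_div_one_add_div_sq _ hba,
    sqrt_sq_div_mul_sq (sub_nonneg.2 hab.le) hv0, sqrt_sq_div_mul_sq (sub_nonneg.2 hvu) hb0,
    ← add_div, div_pow, Real.sq_sqrt (by positivity), hchord,
    show (b - a) * v + (u - v) * b = u * b - a * v by ring, hlagrange]
  field_simp
  ring

/-- **Doubling identity for the pairwise rate.**
For `0 < t₁ < t₂ < 1` and `c = [(√(1-t₂) - √(1-t₁))/(√t₁ - √t₂)]²`,
`[√((1 - c/(1+c))(1-t₂)) + √((c/(1+c))·t₂)]² = (1/2)·[1 + √((1-t₁)(1-t₂)) + √(t₁t₂)]`. -/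
theorem doubling_rate_identity
    (t₁ t₂ : ℝ) (h0 : 0 < t₁) (h12 : t₁ < t₂) (h1 : t₂ < 1)
    (c : ℝ)
    (hc : c = ((Real.sqrt (1 - t₂) - Real.sqrt (1 - t₁)) /
      (Real.sqrt t₁ - Real.sqrt t₂)) ^ 2) :
    (Real.sqrt ((1 - c / (1 + c)) * (1 - t₂)) + Real.sqrt ((c / (1 + c)) * t₂)) ^ 2
      = (1 / 2) * (1 + Real.sqrt ((1 - t₁) * (1 - t₂)) + Real.sqrt (t₁ * t₂)) := by
  have h02 : 0 < t₂ := h0.trans h12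
  have on_circle : ∀ {t : ℝ}, 0 ≤ t → t ≤ 1 → √t ^ 2 + √(1 - t) ^ 2 = 1 := fun h h' => by
    rw [Real.sq_sqrt h, Real.sq_sqrt (sub_nonneg.2 h')]
    ring
  have key := doubling_identity_of_unit_vectors (on_circle h0.le (h12.trans h1).le)
    (on_circle h02.le h1.le) (Real.sqrt_nonneg _) (Real.sqrt_nonneg _)
    (Real.sqrt_lt_sqrt h0.le h12) (Real.sqrt_le_sqrt (by linarith)) hc
  rwa [Real.sq_sqrt (sub_nonneg.2 h1.le), Real.sq_sqrt h02.le, ← Real.sqrt_mul (by linarith),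
    ← Real.sqrt_mul h0.le] at key
end
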